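/- arXiv:2604.03013 — 5 statements merged into one kernel-verified Lean document; each statement's English description precedes it below -/
import Mathlib

section
/- With the same recursions as above, if α^{[K,i]}(τ) = β^{[i]}(τ) for all i and all trees τ with ht(τ) ≤ h−1, then for any error equation discretization matrix A^{K+1}_Δ, the next iterate satisfies α^{[K+1,i]}(τ) = β^{[i]}(τ) for all i and all trees τ with ht(τ) ≤ h. -/
inductive RTree where
  | node : List RTree → RTree

namespace RTree

def size : RTree → ℕ
  | .node ts => 1 + (ts.attach.map (fun x => size x.1)).sum
decreasing_by
  have := List.sizeOf_lt_of_mem x.2; simp only [RTree.node.sizeOf_spec]; omega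

def height : RTree → ℕ
  | .node ts => 1 + (ts.attach.map (fun x => height x.1)).foldr max 0
decreasing_by
  have := List.sizeOf_lt_of_mem x.2; simp only [RTree.node.sizeOf_spec]; omega

def isBamboo : RTree → Prop
  | .node [] => True
  | .node [t] => isBamboo t
  | .node (_ :: _ :: _) => False

def bamboo : ℕ → RTree
  | 0 => .node []
  | n + 1 => .node [bamboo n]

def factorial : RTree → ℕ
  | .node ts => (RTree.node ts).size * (ts.attach.map (fun x => factorial x.1)).prod
decreasing_by
  have := List.sizeOf_lt_of_mem x.2; simp only [RTree.node.sizeOf_spec]; omega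

end RTree

open scoped BigOperators

/-!
A tree of height at most `h` has only children of height at most `h - 1`. On those children the
`K`-th iterate already agrees with `β` by hypothesis and, by induction on height, so does the
`(K+1)`-st; the two sums in the recursion for `α^{[K+1]}` then recombine, since
`(a - ã) + ã = a`, into the recursion for `β`.
-/

namespace RTree

theorem height_pos (τ : RTree) : 0 < τ.height := by
  cases τ
  rw [height]
  omega

theorem height_lt_of_mem {ts : List RTree} {t : RTree} (ht : t ∈ ts) :
    t.height < (node ts).height := by
  rw [height]
  have : t.height ≤ (ts.attach.map fun x => x.1.height).foldr max 0 :=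
    List.le_max_of_le' 0 (List.mem_map.2 ⟨⟨t, ht⟩, List.mem_attach _ _, rfl⟩) le_rfl
  omega

end RTree

theorem sdc_stage_node_eq {R : Type*} [CommRing R] {s : ℕ} {a aΔ : Fin s → Fin s → R}
    {β αK αK1 : Fin s → RTree → R}
    (hβ : ∀ i, ∀ π : List RTree, β i (.node π) = ∑ j, a i j * (π.map (β j)).prod)
    (hαK1 : ∀ i, ∀ π : List RTree, αK1 i (.node π) =
      (∑ j, (a i j - aΔ i j) * (π.map (αK j)).prod) + ∑ j, aΔ i j * (π.map (αK1 j)).prod)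
    {π : List RTree} (hK : ∀ j, ∀ t ∈ π, αK j t = β j t)
    (hK1 : ∀ j, ∀ t ∈ π, αK1 j t = β j t) (i : Fin s) :
    αK1 i (.node π) = β i (.node π) := by
  have hmapK : ∀ j, π.map (αK j) = π.map (β j) := fun j => List.map_congr_left (hK j)
  have hmapK1 : ∀ j, π.map (αK1 j) = π.map (β j) := fun j => List.map_congr_left (hK1 j)
  rw [hαK1, hβ, ← Finset.sum_add_distrib]
  simp only [hmapK, hmapK1, ← add_mul, sub_add_cancel]

/-- If the internal SDC stage coefficient maps after K iterations agree with those of the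
underlying Runge-Kutta method on all trees of height ≤ h−1, then after one more iteration
with an arbitrary EED, they agree on all trees of height ≤ h. -/
theorem sdc_stage_height_order_step (s : ℕ)
    (a aΔ : Fin s → Fin s → ℝ)
    (βi : Fin s → RTree → ℝ)
    (αKi αK1i : Fin s → RTree → ℝ)
    (hβi : ∀ i, ∀ π : List RTree, βi i (.node π) = ∑ j, a i j * (π.map (βi j)).prod)
    (hαK1i : ∀ i, ∀ π : List RTree, αK1i i (.node π) =
      (∑ j, (a i j - aΔ i j) * (π.map (αKi j)).prod) +
        ∑ j, aΔ i j * (π.map (αK1i j)).prod)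
    (h : ℕ)
    (hstage : ∀ i, ∀ τ : RTree, τ.height ≤ h - 1 → αKi i τ = βi i τ) :
    ∀ i, ∀ τ : RTree, τ.height ≤ h → αK1i i τ = βi i τ := by
  suffices H : ∀ n ≤ h, ∀ i, ∀ τ : RTree, τ.height ≤ n → αK1i i τ = βi i τ from
    H h le_rfl
  intro n
  induction n with
  | zero => intro _ i τ hτ; exact absurd hτ τ.height_pos.not_ge
  | succ n ih =>
    rintro hn i ⟨π⟩ hτ
    have hchild : ∀ t ∈ π, t.height ≤ n := fun t ht => by
      have := RTree.height_lt_of_mem ht; omega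
    exact sdc_stage_node_eq hβi hαK1i
      (fun j t ht => hstage j t (by have := hchild t ht; omega))
      (fun j t ht => ih (by omega) j t (hchild t ht)) i
end

section
/- Let (A, b, c) be a collocation Runge-Kutta method satisfying C(η): Σⱼ a_{ij} c_j^{q−1} = c_i^q / q for q = 1,…,η, and let the EEDs A^k_Δ satisfy C_{W_k}(η_k): Σⱼ ã^k_{ij} c_j^{q−1} = c_i^q W_{k,q}, with 1 ≤ η_k ≤ η and η_{k+1} ≤ η_k + 1 for k = 1,…,K, with A⁰_Δ = 0. Then for every rooted tree τ with |τ| ≤ η_K there is a constant ω_K(τ) (independent of i) such that the stage coefficient maps satisfy α^{[K,i]}(τ) = c_i^{|τ|} ω_K(τ), where ω_K is extended multiplicatively to forests and satisfies the recursion ω_K(B⁺(π)) = (1/|B⁺(π)|) ω_{K−1}(π) − W_{K,|B⁺(π)|} ω_{K−1}(π) + W_{K,|B⁺(π)|} ω_K(π). -/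
/-!
Induction on the sweep `k` and, inside a sweep, on the tree. If every child `t` of
`τ = B⁺(π)` already factors as `α(t) = c^{|t|} ω(t)`, then both `j`-sums in the recursion for
`α^{[k,i]}(τ)` only see the moments `Σⱼ a_{ij} c_j^{|τ|-1}` and `Σⱼ ã^k_{ij} c_j^{|τ|-1}`,
which C(η) and C_W(η_k) turn into `c_i^{|τ|}/|τ|` and `c_i^{|τ|} W_{k,|τ|}`. Children of a
tree with `|τ| ≤ η_{k+1}` have at most `η_{k+1} - 1 ≤ η_k` vertices, so they are covered at
sweep `k` as well.
-/

namespace RTree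

@[elab_as_elim]
theorem induction_on {P : RTree → Prop} (τ : RTree)
    (node : ∀ π : List RTree, (∀ t ∈ π, P t) → P (.node π)) : P τ :=
  match τ with
  | .node π => node π fun t _ => induction_on t node

theorem size_node (π : List RTree) : (node π).size = (π.map size).sum + 1 := by
  rw [size, List.attach_map_val, Nat.add_comm]

theorem size_lt_size_node {t : RTree} {π : List RTree} (ht : t ∈ π) :
    t.size < (node π).size :=
  size_node π ▸ Nat.lt_succ_of_le (List.le_sum_of_mem (List.mem_map_of_mem ht))

end RTree

theorem List.prod_map_eq_pow_sum_mul {α M : Type*} [CommMonoid M] {f g : α → M}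
    {n : α → ℕ} (x : M) (l : List α) (h : ∀ t ∈ l, f t = x ^ n t * g t) :
    (l.map f).prod = x ^ (l.map n).sum * (l.map g).prod := by
  induction l with
  | nil => simp
  | cons t l ih =>
    rw [List.map_cons, List.map_cons, List.map_cons, List.prod_cons, List.prod_cons,
      List.sum_cons, pow_add, h t List.mem_cons_self,
      ih fun u hu => h u (List.mem_cons_of_mem t hu), mul_mul_mul_comm]

/-- The weights `ω_k` of the paper. -/
noncomputable def sdcWeight (W : ℕ → ℕ → ℝ) : ℕ → RTree → ℝ
  | 0, _ => 0
  | k + 1, .node π =>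
      (1 / ((RTree.node π).size : ℝ) - W (k + 1) (RTree.node π).size) *
          (π.map (sdcWeight W k)).prod +
        W (k + 1) (RTree.node π).size * (π.map (sdcWeight W (k + 1))).prod
termination_by k τ => (k, sizeOf τ)

theorem sdcWeight_zero (W : ℕ → ℕ → ℝ) (τ : RTree) : sdcWeight W 0 τ = 0 := by
  rw [sdcWeight]

theorem sdcWeight_succ_node (W : ℕ → ℕ → ℝ) (k : ℕ) (π : List RTree) :
    sdcWeight W (k + 1) (.node π) =
      (1 / ((RTree.node π).size : ℝ) - W (k + 1) (RTree.node π).size) *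
          (π.map (sdcWeight W k)).prod +
        W (k + 1) (RTree.node π).size * (π.map (sdcWeight W (k + 1))).prod := by
  rw [sdcWeight]

theorem Finset.sum_sub_mul_add_sum_mul {ι R : Type*} [Fintype ι] [CommRing R] (a d y : ι → R)
    (P Q : R) :
    ∑ j, (a j - d j) * (y j * P) + ∑ j, d j * (y j * Q) =
      (∑ j, a j * y j - ∑ j, d j * y j) * P + (∑ j, d j * y j) * Q := by
  simp only [← Finset.sum_sub_distrib, Finset.sum_mul]
  congr 1 <;> refine Finset.sum_congr rfl fun j _ => by ring

theorem sweep_factorization {ι : Type*} [Fintype ι] {c : ι → ℝ} {a d : ι → ι → ℝ}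
    {w : ℕ → ℝ} {n : ℕ} {αPrev α : ι → RTree → ℝ} {ωPrev ω : RTree → ℝ}
    (hC : ∀ i, ∀ q, 1 ≤ q → q ≤ n → ∑ j, a i j * c j ^ (q - 1) = c i ^ q / q)
    (hCW : ∀ i, ∀ q, 1 ≤ q → q ≤ n → ∑ j, d i j * c j ^ (q - 1) = c i ^ q * w q)
    (hPrev : ∀ τ : RTree, τ.size < n → ∀ i, αPrev i τ = c i ^ τ.size * ωPrev τ)
    (hα : ∀ i, ∀ π : List RTree, α i (.node π) =
      (∑ j, (a i j - d i j) * (π.map (αPrev j)).prod) + ∑ j, d i j * (π.map (α j)).prod)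
    (hω : ∀ π : List RTree, ω (.node π) =
      (1 / ((RTree.node π).size : ℝ) - w (RTree.node π).size) * (π.map ωPrev).prod +
        w (RTree.node π).size * (π.map ω).prod)
    (τ : RTree) (hτ : τ.size ≤ n) (i : ι) :
    α i τ = c i ^ τ.size * ω τ := by
  induction τ using RTree.induction_on generalizing i with
  | node π ih =>
  set m := (π.map RTree.size).sum
  have hsize : (RTree.node π).size = m + 1 := RTree.size_node π
  have hPrevProd (j : ι) : (π.map (αPrev j)).prod = c j ^ m * (π.map ωPrev).prod :=
    List.prod_map_eq_pow_sum_mul _ π fun t ht =>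
      hPrev t ((RTree.size_lt_size_node ht).trans_le hτ) j
  have hProd (j : ι) : (π.map (α j)).prod = c j ^ m * (π.map ω).prod :=
    List.prod_map_eq_pow_sum_mul _ π fun t ht =>
      ih t ht ((RTree.size_lt_size_node ht).le.trans hτ) j
  have hq : m + 1 ≤ n := hsize ▸ hτ
  have hA := hC i (m + 1) (Nat.le_add_left 1 m) hq
  have hD := hCW i (m + 1) (Nat.le_add_left 1 m) hq
  rw [Nat.add_sub_cancel] at hA hD
  rw [hα, hω, hsize]
  simp only [hPrevProd, hProd, Finset.sum_sub_mul_add_sum_mul, hA, hD]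
  ring

theorem sdc_stage_factorization_general (s K : ℕ)
    (c : Fin s → ℝ) (a : Fin s → Fin s → ℝ) (aΔ : ℕ → Fin s → Fin s → ℝ)
    (η : ℕ → ℕ) (ηA : ℕ) (W : ℕ → ℕ → ℝ)
    (hC : ∀ i, ∀ q, 1 ≤ q → q ≤ ηA → ∑ j, a i j * c j ^ (q - 1) = c i ^ q / q)
    (hCW : ∀ k, 1 ≤ k → k ≤ K → ∀ i, ∀ q, 1 ≤ q → q ≤ η k →
      ∑ j, aΔ k i j * c j ^ (q - 1) = c i ^ q * W k q)
    (hηlb : ∀ k, 1 ≤ k → k ≤ K → 1 ≤ η k ∧ η k ≤ ηA)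
    (hηstep : ∀ k, 1 ≤ k → k < K → η (k + 1) ≤ η k + 1)
    (α : ℕ → Fin s → RTree → ℝ)
    (h0 : ∀ i, ∀ τ : RTree, α 0 i τ = 0)
    (hrec : ∀ k, 1 ≤ k → k ≤ K → ∀ i, ∀ π : List RTree, α k i (.node π) =
      (∑ j, (a i j - aΔ k i j) * (π.map (α (k - 1) j)).prod) +
        ∑ j, aΔ k i j * (π.map (α k j)).prod) :
    ∃ ω : ℕ → RTree → ℝ,
      (∀ τ : RTree, ω 0 τ = 0) ∧
      (∀ k, 1 ≤ k → k ≤ K → ∀ τ : RTree, τ.size ≤ η k → ∀ i,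
        α k i τ = c i ^ τ.size * ω k τ) ∧
      (∀ k, 1 ≤ k → k ≤ K → ∀ π : List RTree, (RTree.node π).size ≤ η k →
        ω k (.node π) = (1 / ((RTree.node π).size : ℝ)) * (π.map (ω (k - 1))).prod
          - W k (RTree.node π).size * (π.map (ω (k - 1))).prod
          + W k (RTree.node π).size * (π.map (ω k)).prod) := by
  have sweep (k : ℕ) (hk : k < K)
      (hPrev : ∀ τ : RTree, τ.size < η (k + 1) → ∀ i,
        α k i τ = c i ^ τ.size * sdcWeight W k τ) :
      ∀ τ : RTree, τ.size ≤ η (k + 1) → ∀ i,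
        α (k + 1) i τ = c i ^ τ.size * sdcWeight W (k + 1) τ :=
    sweep_factorization
      (fun i q hq1 hq => hC i q hq1 (hq.trans (hηlb (k + 1) (by omega) hk).2))
      (hCW (k + 1) (by omega) hk) hPrev (hrec (k + 1) (by omega) hk)
      (sdcWeight_succ_node W k)
  have factorization (k : ℕ) (hk : k < K) : ∀ τ : RTree, τ.size ≤ η (k + 1) → ∀ i,
      α (k + 1) i τ = c i ^ τ.size * sdcWeight W (k + 1) τ := by
    induction k with
    | zero => exact sweep 0 hk fun τ _ i => by rw [h0, sdcWeight_zero, mul_zero]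
    | succ k ih =>
      refine sweep (k + 1) hk fun τ hτ => ih (by omega) τ ?_
      have := hηstep (k + 1) (by omega) hk
      omega
  refine ⟨sdcWeight W, sdcWeight_zero W, ?_, ?_⟩
  · intro k hk1 hkK
    obtain ⟨k, rfl⟩ := Nat.exists_eq_add_of_le' hk1
    exact factorization k (by omega)
  · intro k hk1 _ π _
    obtain ⟨k, rfl⟩ := Nat.exists_eq_add_of_le' hk1
    rw [Nat.add_sub_cancel, sdcWeight_succ_node]
    ring

/-- Under simplifying assumptions C(η) on the collocation matrix and C_{W_k}(η_k) on the
EEDs, the SDC stage coefficient maps factor as α^{[K,i]}(τ) = c_i^{|τ|} ω_K(τ) for all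
trees with |τ| ≤ η_K, with ω_K independent of the stage, multiplicative on forests, and
satisfying the stated recursion. -/
theorem sdc_stage_factorization (s K : ℕ) (hK : 1 ≤ K)
    (c : Fin s → ℝ) (a : Fin s → Fin s → ℝ) (aΔ : ℕ → Fin s → Fin s → ℝ)
    (η : ℕ → ℕ) (ηA : ℕ) (W : ℕ → ℕ → ℝ)
    (hC : ∀ i, ∀ q, 1 ≤ q → q ≤ ηA → ∑ j, a i j * c j ^ (q - 1) = c i ^ q / q)
    (hCW : ∀ k, 1 ≤ k → k ≤ K → ∀ i, ∀ q, 1 ≤ q → q ≤ η k →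
      ∑ j, aΔ k i j * c j ^ (q - 1) = c i ^ q * W k q)
    (hηlb : ∀ k, 1 ≤ k → k ≤ K → 1 ≤ η k ∧ η k ≤ ηA)
    (hηstep : ∀ k, 1 ≤ k → k < K → η (k + 1) ≤ η k + 1)
    (α : ℕ → Fin s → RTree → ℝ)
    (h0 : ∀ i, ∀ τ : RTree, α 0 i τ = 0)
    (hrec : ∀ k, 1 ≤ k → k ≤ K → ∀ i, ∀ π : List RTree, α k i (.node π) =
      (∑ j, (a i j - aΔ k i j) * (π.map (α (k - 1) j)).prod) +
        ∑ j, aΔ k i j * (π.map (α k j)).prod) :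
    ∃ ω : ℕ → RTree → ℝ,
      (∀ τ : RTree, ω 0 τ = 0) ∧
      (∀ k, 1 ≤ k → k ≤ K → ∀ τ : RTree, τ.size ≤ η k → ∀ i,
        α k i τ = c i ^ τ.size * ω k τ) ∧
      (∀ k, 1 ≤ k → k ≤ K → ∀ π : List RTree, (RTree.node π).size ≤ η k →
        ω k (.node π) = (1 / ((RTree.node π).size : ℝ)) * (π.map (ω (k - 1))).prod
          - W k (RTree.node π).size * (π.map (ω (k - 1))).prod
          + W k (RTree.node π).size * (π.map (ω k)).prod) :=
  sdc_stage_factorization_general s K c a aΔ η ηA W hC hCW hηlb hηstep α h0 hrec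
end

section
/- In the setting of the previous lemma, additionally assume B(p): Σᵢ bᵢ c_i^{q−1} = 1/q for q = 1,…,p with p ≥ η_K + 1. Then for every tree τ = B⁺(π) with |τ| ≤ η_K + 1, the SDC output coefficient satisfies α^{[K]}(τ) = ω_K(π)/|τ|. -/
open scoped BigOperators

theorem RTree.size_node_s11 (ts : List RTree) : (node ts).size = 1 + (ts.map size).sum := by
  rw [size, List.attach_map_val]

theorem sum_mul_pow_mul_eq_div {ι 𝕜 : Type*} [Fintype ι] [Field 𝕜] (b c : ι → 𝕜) (n : ℕ)
    (w : 𝕜) (hquad : ∑ i, b i * c i ^ n = 1 / (n + 1)) :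
    ∑ i, b i * (c i ^ n * w) = w / (n + 1) := by
  simp_rw [← mul_assoc, ← Finset.sum_mul, hquad]
  ring

/-- Under additionally the quadrature condition B(p) with p ≥ η_K + 1, the SDC output
coefficients satisfy α^{[K]}(B⁺(π)) = ω_K(π)/|B⁺(π)| for trees of size ≤ η_K + 1. -/
theorem sdc_output_via_omega (s K : ℕ)
    (b : Fin s → ℝ) (c : Fin s → ℝ) (η : ℕ → ℕ) (p : ℕ)
    (hp : η K + 1 ≤ p)
    (hB : ∀ q, 1 ≤ q → q ≤ p → ∑ i, b i * c i ^ (q - 1) = 1 / (q : ℝ))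
    (α : ℕ → Fin s → RTree → ℝ) (αout : RTree → ℝ) (ω : ℕ → RTree → ℝ)
    (hout : ∀ π : List RTree, αout (.node π) = ∑ i, b i * (π.map (α K i)).prod)
    (hstage : ∀ π : List RTree, (π.map RTree.size).sum ≤ η K → ∀ i,
      (π.map (α K i)).prod = c i ^ (π.map RTree.size).sum * (π.map (ω K)).prod) :
    ∀ π : List RTree, (RTree.node π).size ≤ η K + 1 →
      αout (.node π) = (π.map (ω K)).prod / ((RTree.node π).size : ℝ) := by
  intro π hle
  set n := (π.map RTree.size).sum
  have hsize : (RTree.node π).size = 1 + n := RTree.size_node_s11 π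
  have hn : n ≤ η K := by omega
  have hquad : ∑ i, b i * c i ^ n = 1 / (n + 1 : ℝ) := by
    simpa using hB (n + 1) (by omega) (by omega)
  rw [hout, hsize, Finset.sum_congr rfl fun i _ => by rw [hstage π hn i]]
  push_cast
  rw [add_comm 1]
  exact sum_mul_pow_mul_eq_div b c n _ hquad
end

section
/- Let A be the coefficient matrix of an s-stage collocation method with distinct nonzero nodes c₁ < … < c_s, and consider the matrices B_S^k = I − (A^k_Δ)^{-1} A with A^k_Δ = diag(c)/k for k = 1,…,s. Then the product B_S^s ⋯ B_S^2 B_S^1 = 0, i.e. the stiff-limit SDC iteration matrices for the MIN-SR-FLEX choice are jointly nilpotent after s iterations. -/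
open scoped BigOperators Matrix

/-!
Interpolation on the nodes is exact for `x ^ n` with `n < s`, so the collocation matrix maps
`v n = (c j ^ n)_j` to `(c j ^ (n + 1) / (n + 1))_j`: `v n` is an eigenvector of
`diag(c)⁻¹ A` with eigenvalue `1 / (n + 1)`. Each factor of the product acts on `v n` as a scalar,
and the factor with `k = n` as zero, so the product kills every `v n`. These vectors are the
columns of a Vandermonde matrix with distinct nodes, hence span, and the product vanishes.
-/

open Polynomial in
theorem Lagrange.eval_basis_univ {F ι : Type*} [Field F] [Fintype ι] [DecidableEq ι]
    (c : ι → F) (j : ι) (x : F) :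
    (Lagrange.basis Finset.univ c j).eval x =
      ∏ k ∈ Finset.univ.filter (fun k => k ≠ j), (x - c k) / (c j - c k) := by
  rw [Lagrange.basis, eval_prod, ← Finset.filter_ne']
  refine Finset.prod_congr rfl fun k _ => ?_
  rw [Lagrange.basisDivisor, eval_mul, eval_C, eval_sub, eval_X, eval_C, div_eq_inv_mul]

open Polynomial in
theorem Lagrange.sum_eval_mul_prod_eq_eval {F ι : Type*} [Field F] [Fintype ι] [DecidableEq ι]
    {c : ι → F} (hc : Function.Injective c) {p : F[X]} (hp : p.degree < Fintype.card ι)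
    (x : F) :
    ∑ j, p.eval (c j) * ∏ k ∈ Finset.univ.filter (fun k => k ≠ j), (x - c k) / (c j - c k) =
      p.eval x := by
  conv_rhs => rw [Lagrange.eq_interpolate hc.injOn hp]
  simp only [Lagrange.interpolate_apply, eval_finsetSum, eval_mul, eval_C,
    Lagrange.eval_basis_univ]

theorem Matrix.list_prod_map_mulVec_of_forall_mulVec_eq_smul {R n ι : Type*} [CommRing R]
    [Fintype n] [DecidableEq n] {f : ι → Matrix n n R} {g : ι → R} {v : n → R}
    (l : List ι) (h : ∀ i ∈ l, f i *ᵥ v = g i • v) :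
    (l.map f).prod *ᵥ v = (l.map g).prod • v := by
  induction l with
  | nil => simp
  | cons a l ih =>
    simp only [List.map_cons, List.prod_cons, ← Matrix.mulVec_mulVec,
      ih fun i hi => h i (List.mem_cons_of_mem a hi), Matrix.mulVec_smul,
      h a List.mem_cons_self, smul_smul, mul_comm]

theorem Matrix.eq_zero_of_forall_mulVec_pow_eq_zero {R m : Type*} [CommRing R] [IsDomain R]
    {s : ℕ} {c : Fin s → R} (hc : Function.Injective c) {M : Matrix m (Fin s) R}
    (hM : ∀ n : Fin s, M *ᵥ (fun j => c j ^ (n : ℕ)) = 0) : M = 0 := by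
  ext i j
  refine congrFun (Matrix.eq_zero_of_forall_pow_sum_mul_pow_eq_zero hc fun n => ?_) j
  simpa [Matrix.mulVec, dotProduct] using congrFun (hM n) i

section Collocation

variable {s : ℕ} {c : Fin s → ℝ} {A : Matrix (Fin s) (Fin s) ℝ}

theorem collocation_mulVec_pow (hc : Function.Injective c)
    (hA : ∀ i j, A i j =
      ∫ x in (0:ℝ)..(c i), ∏ k ∈ Finset.univ.filter (fun k => k ≠ j), (x - c k) / (c j - c k))
    {n : ℕ} (hn : n < s) :
    A *ᵥ (fun j => c j ^ n) = fun i => c i ^ (n + 1) / (n + 1) := by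
  funext i
  have hcont : ∀ j : Fin s, Continuous fun x : ℝ =>
      c j ^ n * ∏ k ∈ Finset.univ.filter (fun k => k ≠ j), (x - c k) / (c j - c k) :=
    fun j => by fun_prop
  calc (A *ᵥ fun j => c j ^ n) i
      = ∑ j, ∫ x in (0:ℝ)..(c i),
          c j ^ n * ∏ k ∈ Finset.univ.filter (fun k => k ≠ j), (x - c k) / (c j - c k) := by
        simp only [Matrix.mulVec, dotProduct, hA, intervalIntegral.integral_const_mul, mul_comm]
    _ = ∫ x in (0:ℝ)..(c i), ∑ j,
          c j ^ n * ∏ k ∈ Finset.univ.filter (fun k => k ≠ j), (x - c k) / (c j - c k) :=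
        (intervalIntegral.integral_finsetSum fun j _ => (hcont j).intervalIntegrable _ _).symm
    _ = ∫ x in (0:ℝ)..(c i), x ^ n := by
        refine intervalIntegral.integral_congr fun x _ => ?_
        have hdeg : (Polynomial.X ^ n : Polynomial ℝ).degree < Fintype.card (Fin s) := by
          rw [Fintype.card_fin, Polynomial.degree_X_pow]
          exact_mod_cast hn
        simpa using Lagrange.sum_eval_mul_prod_eq_eval hc hdeg x
    _ = c i ^ (n + 1) / (n + 1) := by rw [integral_pow]; ring

theorem collocation_diagonal_inv_mul_mulVec_pow (hc : Function.Injective c)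
    (hc0 : ∀ i, c i ≠ 0)
    (hA : ∀ i j, A i j =
      ∫ x in (0:ℝ)..(c i), ∏ k ∈ Finset.univ.filter (fun k => k ≠ j), (x - c k) / (c j - c k))
    {n : ℕ} (hn : n < s) :
    ((Matrix.diagonal c)⁻¹ * A) *ᵥ (fun j => c j ^ n) = ((n : ℝ) + 1)⁻¹ • fun j => c j ^ n := by
  rw [Matrix.inv_diagonal, ← Matrix.mulVec_mulVec, collocation_mulVec_pow hc hA hn]
  have hinv : Ring.inverse c * c = 1 :=
    Ring.inverse_mul_cancel c (Pi.isUnit_iff.2 fun i => (hc0 i).isUnit)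
  funext i
  simp only [Matrix.mulVec_diagonal, Pi.smul_apply, smul_eq_mul]
  have hinv_i : Ring.inverse c i * c i = 1 := congrFun hinv i
  linear_combination (c i ^ n / (n + 1)) * hinv_i

end Collocation

/-- For a collocation method with distinct nonzero nodes c ∈ (0,1], the stiff-limit
SDC iteration matrices B_S^k = I − k·diag(c)⁻¹ A for the MIN-SR-FLEX choice
A_Δ^k = diag(c)/k are jointly nilpotent after s iterations:
B_S^s ⋯ B_S^2 B_S^1 = 0. -/
theorem min_sr_flex_nilpotent (s : ℕ) (c : Fin s → ℝ)
    (hc : Function.Injective c) (hc01 : ∀ i, c i ∈ Set.Ioc (0:ℝ) 1)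
    (A : Matrix (Fin s) (Fin s) ℝ)
    (hA : ∀ i j, A i j =
      ∫ x in (0:ℝ)..(c i), ∏ k ∈ Finset.univ.filter (fun k => k ≠ j), (x - c k) / (c j - c k)) :
    (((List.range s).reverse.map
        (fun k => (1 : Matrix (Fin s) (Fin s) ℝ)
          - ((k + 1 : ℕ) : ℝ) • ((Matrix.diagonal c)⁻¹ * A))).prod) = 0 := by
  have hc0 : ∀ i, c i ≠ 0 := fun i => (hc01 i).1.ne'
  refine Matrix.eq_zero_of_forall_mulVec_pow_eq_zero hc fun n => ?_
  have heigen : ∀ k ∈ (List.range s).reverse,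
      (1 - ((k + 1 : ℕ) : ℝ) • ((Matrix.diagonal c)⁻¹ * A)) *ᵥ (fun j => c j ^ (n : ℕ)) =
        (1 - ((k + 1 : ℕ) : ℝ) * ((n : ℝ) + 1)⁻¹) • fun j => c j ^ (n : ℕ) := fun k _ => by
    rw [Matrix.sub_mulVec, Matrix.one_mulVec, Matrix.smul_mulVec,
      collocation_diagonal_inv_mul_mulVec_pow hc hc0 hA n.isLt, smul_smul, sub_smul, one_smul]
  rw [Matrix.list_prod_map_mulVec_of_forall_mulVec_eq_smul _ heigen]
  -- the factor with k = n annihilates the eigenvector for the eigenvalue 1/(n+1)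
  have hzero : (0 : ℝ) ∈ (List.range s).reverse.map
      fun k : ℕ => 1 - ((k + 1 : ℕ) : ℝ) * ((n : ℝ) + 1)⁻¹ :=
    List.mem_map.2 ⟨n, by simp, by push_cast; field_simp; ring⟩
  rw [List.prod_eq_zero hzero, zero_smul]
end

section
/- Consider the relaxed Runge-Kutta update u_{n+1} = u_n + Δt γ_n Σᵢ bᵢ fᵢ with fᵢ = f(u^{[i]}) and u^{[i]} = u_n + Δt Σⱼ a_{ij} fⱼ, and let S be a symmetric matrix. If γ_n = (2 Σ_{i,j} bᵢ a_{ij} ⟨S fᵢ, fⱼ⟩) / (Σ_{i,j} bᵢ bⱼ ⟨S fᵢ, fⱼ⟩) (with nonzero denominator), then the quadratic form is conserved: u_{n+1}ᵀ S u_{n+1} = u_nᵀ S u_n, provided the vector field satisfies ⟨S u^{[i]}, fᵢ⟩ = 0 for all i (i.e. uᵀ S f(u) = 0 for all u). -/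
/-!
Write `F = ∑ bᵢ fᵢ`, so that `u_{n+1} = uₙ + Δt γ F` and, for symmetric `S`,
`u_{n+1}ᵀ S u_{n+1} = uₙᵀ S uₙ + 2 Δt γ uₙᵀ S F + (Δt γ)² Fᵀ S F`.
Substituting the stage equations into the invariance `u^{[i]}ᵀ S fᵢ = 0` gives
`uₙᵀ S F = -Δt ∑ bᵢ aᵢⱼ ⟨S fᵢ, fⱼ⟩`, while `Fᵀ S F = ∑ bᵢ bⱼ ⟨S fᵢ, fⱼ⟩`. The change of the
quadratic form is therefore `Δt² γ (γ ∑ bᵢ bⱼ ⟨S fᵢ, fⱼ⟩ - 2 ∑ bᵢ aᵢⱼ ⟨S fᵢ, fⱼ⟩)`, which the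
choice of `γ` makes vanish.
-/

open Matrix Finset

namespace Matrix.IsSymm

variable {R n : Type*} [CommSemiring R] [Fintype n] {S : Matrix n n R}

theorem mulVec_dotProduct (hS : S.IsSymm) (x y : n → R) :
    S *ᵥ x ⬝ᵥ y = x ⬝ᵥ S *ᵥ y := by
  rw [dotProduct_mulVec, ← mulVec_transpose, hS.eq, dotProduct_comm]

theorem dotProduct_mulVec_add_smul (hS : S.IsSymm) (x y : n → R) (t : R) :
    (x + t • y) ⬝ᵥ S *ᵥ (x + t • y) =
      x ⬝ᵥ S *ᵥ x + 2 * t * (x ⬝ᵥ S *ᵥ y) + t ^ 2 * (y ⬝ᵥ S *ᵥ y) := by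
  have hyx : y ⬝ᵥ S *ᵥ x = x ⬝ᵥ S *ᵥ y := by rw [← hS.mulVec_dotProduct, dotProduct_comm]
  simp only [mulVec_add, mulVec_smul, add_dotProduct, dotProduct_add, smul_dotProduct,
    dotProduct_smul, smul_eq_mul, hyx]
  ring

end Matrix.IsSymm

theorem Matrix.sum_smul_dotProduct_mulVec_sum_smul {R n ι : Type*} [CommSemiring R] [Fintype n]
    [Fintype ι] (S : Matrix n n R) (b c : ι → R) (g h : ι → n → R) :
    (∑ i, b i • g i) ⬝ᵥ S *ᵥ (∑ j, c j • h j) = ∑ i, ∑ j, b i * c j * (g i ⬝ᵥ S *ᵥ h j) := by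
  simp only [sum_dotProduct, mulVec_sum, dotProduct_sum, mulVec_smul, smul_dotProduct,
    dotProduct_smul, smul_eq_mul, mul_sum]
  rw [sum_comm]
  exact sum_congr rfl fun i _ => sum_congr rfl fun j _ => by ring

section RungeKutta

variable {R n ι : Type*} [CommRing R] [Fintype n] [Fintype ι]
  {S : Matrix n n R} {f : (n → R) → n → R} {a : ι → ι → R} {Δt : R} {un : n → R}
  {u : ι → n → R}

theorem dotProduct_mulVec_stage_derivative {i : ι} (hinv : u i ⬝ᵥ S *ᵥ f (u i) = 0)
    (hu : u i = un + Δt • ∑ j, a i j • f (u j)) :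
    un ⬝ᵥ S *ᵥ f (u i) = -(Δt * ∑ j, a i j * (S *ᵥ f (u i) ⬝ᵥ f (u j))) := by
  nth_rewrite 1 [hu] at hinv
  simp only [add_dotProduct, smul_dotProduct, sum_dotProduct, smul_eq_mul,
    dotProduct_comm (f _) (S *ᵥ f (u i))] at hinv
  linear_combination hinv

theorem dotProduct_mulVec_sum_smul_stage_derivative (b : ι → R)
    (hinv : ∀ i, u i ⬝ᵥ S *ᵥ f (u i) = 0) (hu : ∀ i, u i = un + Δt • ∑ j, a i j • f (u j)) :
    un ⬝ᵥ S *ᵥ (∑ i, b i • f (u i)) =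
      -(Δt * ∑ i, ∑ j, b i * a i j * (S *ᵥ f (u i) ⬝ᵥ f (u j))) := by
  simp only [mulVec_sum, mulVec_smul, dotProduct_sum, dotProduct_smul, smul_eq_mul,
    dotProduct_mulVec_stage_derivative (hinv _) (hu _), mul_sum, ← sum_neg_distrib]
  exact sum_congr rfl fun i _ => sum_congr rfl fun j _ => by ring

end RungeKutta

/-- Relaxation Runge-Kutta methods conserve the quadratic invariant u ↦ uᵀ S u:
with the relaxation parameter γₙ chosen as stated, u_{n+1}ᵀ S u_{n+1} = uₙᵀ S uₙ,
provided uᵀ S f(u) = 0 for all u. -/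
theorem relaxation_conserves_quadratic (d s : ℕ)
    (f : (Fin d → ℝ) → (Fin d → ℝ)) (S : Matrix (Fin d) (Fin d) ℝ)
    (hS : S.IsSymm)
    (hinv : ∀ u : Fin d → ℝ, dotProduct u (S.mulVec (f u)) = 0)
    (b : Fin s → ℝ) (a : Fin s → Fin s → ℝ) (Δt : ℝ)
    (un : Fin d → ℝ) (u : Fin s → Fin d → ℝ)
    (hu : ∀ i, u i = un + Δt • ∑ j, a i j • f (u j))
    (denom : ℝ)
    (hdenom : denom = ∑ i, ∑ j, b i * b j * dotProduct (S.mulVec (f (u i))) (f (u j)))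
    (hdne : denom ≠ 0)
    (γ : ℝ)
    (hγ : γ = 2 * (∑ i, ∑ j, b i * a i j * dotProduct (S.mulVec (f (u i))) (f (u j)))
      / denom)
    (un1 : Fin d → ℝ)
    (hun1 : un1 = un + (Δt * γ) • ∑ i, b i • f (u i)) :
    dotProduct un1 (S.mulVec un1) = dotProduct un (S.mulVec un) := by
  have hcross := dotProduct_mulVec_sum_smul_stage_derivative b (fun i => hinv (u i)) hu
  have hquad : (∑ i, b i • f (u i)) ⬝ᵥ S *ᵥ (∑ i, b i • f (u i)) = denom := by
    rw [S.sum_smul_dotProduct_mulVec_sum_smul, hdenom]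
    simp only [hS.mulVec_dotProduct]
  have hγdenom : γ * denom = 2 * ∑ i, ∑ j, b i * a i j * (S *ᵥ f (u i) ⬝ᵥ f (u j)) := by
    rw [hγ, div_mul_cancel₀ _ hdne]
  rw [hun1, hS.dotProduct_mulVec_add_smul, hcross, hquad]
  linear_combination Δt ^ 2 * γ * hγdenom
end
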